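/- arXiv:2305.08940 — 7 statements merged into one kernel-verified Lean document; each statement's English description precedes it below -/
import Mathlib

section
/- If X is a metrizable space, B is a countable family of Borel subsets of X not containing the empty set, and every element of B is both closed and open in X, then Δ^B(X) is a closed subset of the product space Δ(X)^B. -/
/-! For a clopen set `B` and a bounded continuous `f`, `1_B · f` is again bounded continuous, so
`ν ↦ ν|_B` is continuous for the weak topology. The chain rule for `B ⊆ C` says exactly
`μ(B|C) • μ(·|B)|_B = μ(·|C)|_B`, so `Δ^𝓑(X)` is cut out by equations between continuous maps
into the space of finite measures, which is Hausdorff because `X` is metrizable. -/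

open MeasureTheory Set TopologicalSpace

/-- A conditional probability system on `(X, Σ_X, 𝓑)`: a family of probability measures
`μ(·|B)`, `B ∈ 𝓑`, with `μ(B|B) = 1` and the chain rule
`μ(A|B)·μ(B|C) = μ(A|C)` whenever `A ⊆ B ⊆ C`, `A` measurable, `B, C ∈ 𝓑`. -/
def IsCPS {X : Type*} [MeasurableSpace X] (𝓑 : Set (Set X)) (μ : 𝓑 → ProbabilityMeasure X) : Prop :=
  (∀ B : 𝓑, (μ B : Measure X) (B : Set X) = 1) ∧
  ∀ (A : Set X) (B C : 𝓑), MeasurableSet A → A ⊆ (B : Set X) → (B : Set X) ⊆ (C : Set X) →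
    (μ B : Measure X) A * (μ C : Measure X) (B : Set X) = (μ C : Measure X) A

open scoped NNReal ENNReal BoundedContinuousFunction

theorem MeasureTheory.Measure.smul_restrict_eq_restrict_iff {X : Type*} [MeasurableSpace X]
    {μ ν : Measure X} {s : Set X} (hs : MeasurableSet s) (c : ℝ≥0∞) :
    c • μ.restrict s = ν.restrict s ↔ ∀ t, MeasurableSet t → t ⊆ s → μ t * c = ν t := by
  constructor
  · intro h t ht hts
    simpa [Measure.restrict_apply ht, inter_eq_self_of_subset_left hts, mul_comm] using
      congr($h t)
  · intro h
    ext t ht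
    rw [Measure.smul_apply, Measure.restrict_apply ht, Measure.restrict_apply ht, smul_eq_mul,
      mul_comm]
    exact h _ (ht.inter hs) inter_subset_right

theorem BoundedContinuousFunction.mul_nnrealPart_indicator_apply {X : Type*} [TopologicalSpace X]
    (f : X →ᵇ ℝ≥0) {s : Set X} (hs : IsClopen s) (x : X) :
    (f * (indicator s hs).nnrealPart) x = s.indicator f x := by
  by_cases hx : x ∈ s <;> simp [hx, nnrealPart]

theorem MeasureTheory.FiniteMeasure.continuous_restrict_of_isClopen {X : Type*}
    [TopologicalSpace X] [MeasurableSpace X] [OpensMeasurableSpace X] {s : Set X}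
    (hs : IsClopen s) : Continuous fun ν : FiniteMeasure X => ν.restrict s := by
  refine continuous_iff_forall_continuous_lintegral.2 fun f => ?_
  have h (ν : FiniteMeasure X) : ∫⁻ x, f x ∂(ν.restrict s : Measure X) =
      ∫⁻ x, (f * (BoundedContinuousFunction.indicator s hs).nnrealPart) x ∂ν := by
    simp_rw [BoundedContinuousFunction.mul_nnrealPart_indicator_apply, ENNReal.coe_indicator,
      lintegral_indicator hs.isOpen.measurableSet, restrict_measure_eq]
  simpa only [h] using continuous_lintegral_boundedContinuousFunction _

theorem MeasureTheory.ProbabilityMeasure.continuous_apply_of_isClopen {X : Type*}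
    [TopologicalSpace X] [MeasurableSpace X] [OpensMeasurableSpace X] {s : Set X}
    (hs : IsClopen s) : Continuous fun ν : ProbabilityMeasure X => ν s := by
  simpa only [FiniteMeasure.restrict_mass, ProbabilityMeasure.coeFn_toFiniteMeasure,
    Function.comp_def] using
    FiniteMeasure.continuous_mass.comp
      ((FiniteMeasure.continuous_restrict_of_isClopen hs).comp
        ProbabilityMeasure.toFiniteMeasure_continuous)

theorem isCPS_iff_restrict {X : Type*} [MeasurableSpace X] {𝓑 : Set (Set X)}
    (h𝓑 : ∀ B ∈ 𝓑, MeasurableSet B) (μ : 𝓑 → ProbabilityMeasure X) :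
    IsCPS 𝓑 μ ↔ (∀ B : 𝓑, μ B B = 1) ∧ ∀ B C : 𝓑, (B : Set X) ⊆ C →
      μ C B • (μ B).toFiniteMeasure.restrict B = (μ C).toFiniteMeasure.restrict B := by
  refine and_congr (forall_congr' fun B => ?_) ?_
  · rw [← ProbabilityMeasure.ennreal_coeFn_eq_coeFn_toMeasure, ENNReal.coe_eq_one]
  · have hmeasure (B C : 𝓑) : μ C B • (μ B).toFiniteMeasure.restrict B =
        (μ C).toFiniteMeasure.restrict B ↔
        (μ C : Measure X) B • (μ B : Measure X).restrict B = (μ C : Measure X).restrict B := by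
      rw [← FiniteMeasure.toMeasure_injective.eq_iff, FiniteMeasure.toMeasure_smul,
        FiniteMeasure.restrict_measure_eq, FiniteMeasure.restrict_measure_eq,
        ← ProbabilityMeasure.ennreal_coeFn_eq_coeFn_toMeasure, Measure.coe_nnreal_smul]
      rfl
    simp_rw [hmeasure, Measure.smul_restrict_eq_restrict_iff (h𝓑 _ (Subtype.prop _))]
    exact ⟨fun h B C hBC A hA hAB => h A B C hA hAB hBC,
      fun h A B C hA hAB hBC => h B C hBC A hA hAB⟩

theorem cps_closed_of_clopen_general {X : Type*} [TopologicalSpace X] [TopologicalSpace.MetrizableSpace X]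
    [MeasurableSpace X] [BorelSpace X]
    (𝓑 : Set (Set X)) (hclopen : ∀ B ∈ 𝓑, IsClopen B) :
    IsClosed {μ : 𝓑 → ProbabilityMeasure X | IsCPS 𝓑 μ} := by
  have hmass (B C : 𝓑) : Continuous fun μ : 𝓑 → ProbabilityMeasure X => μ C B :=
    (ProbabilityMeasure.continuous_apply_of_isClopen (hclopen B B.2)).comp (continuous_apply C)
  have hrestrict (B C : 𝓑) :
      Continuous fun μ : 𝓑 → ProbabilityMeasure X => (μ C).toFiniteMeasure.restrict B :=
    (FiniteMeasure.continuous_restrict_of_isClopen (hclopen B B.2)).comp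
      (ProbabilityMeasure.toFiniteMeasure_continuous.comp (continuous_apply C))
  simp_rw [isCPS_iff_restrict (fun B hB => (hclopen B hB).isOpen.measurableSet), ofPred_and,
    ofPred_forall]
  exact (isClosed_iInter fun B => isClosed_eq (hmass B B) continuous_const).inter
    (isClosed_iInter fun B => isClosed_iInter fun C => isClosed_iInter fun _ =>
      isClosed_eq ((hmass B C).smul (hrestrict B B)) (hrestrict B C))

/-- If `X` is metrizable, `𝓑` a countable family of Borel sets not containing `∅`, all of whose
members are clopen, then `Δ^𝓑(X)` is a closed subset of the product `Δ(X)^𝓑`. -/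
theorem cps_closed_of_clopen {X : Type*} [TopologicalSpace X] [TopologicalSpace.MetrizableSpace X]
    [MeasurableSpace X] [BorelSpace X]
    (𝓑 : Set (Set X)) (h𝓑ne : 𝓑.Nonempty) (h𝓑c : 𝓑.Countable)
    (h𝓑m : ∀ B ∈ 𝓑, MeasurableSet B) (hempty : ∅ ∉ 𝓑)
    (hclopen : ∀ B ∈ 𝓑, IsClopen B) :
    IsClosed {μ : 𝓑 → ProbabilityMeasure X | IsCPS 𝓑 μ} :=
  cps_closed_of_clopen_general 𝓑 hclopen
end

section
/- Let X be a compact metrizable space and B a countable clopen family of conditioning events of X. Then Δ^B(X) is compact if and only if X is compact; in particular, Δ^B(X) is compact. -/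
open MeasureTheory Set TopologicalSpace

/-!
`Δ^𝓑(X)` is a subset of `Δ(X)^𝓑`, which is compact by Prokhorov's theorem on the compact space `X`
and Tychonoff, so it suffices that it is closed. The chain rule for `B ⊆ C` says exactly that
`μ(·|C)` restricted to `B` equals `μ(B|C) • μ(·|B)` restricted to `B`. For clopen `B` the indicator
of `B` is continuous, so restriction to `B` and evaluation at `B` are weakly continuous, and both
the normalisation `μ(B|B) = 1` and the chain rule become equalities between continuous functions.
-/

namespace MeasureTheory

theorem Measure.forall_mul_eq_iff_restrict_eq {Ω : Type*} [MeasurableSpace Ω] {μ ν : Measure Ω}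
    {B : Set Ω} (hB : MeasurableSet B) :
    (∀ A, MeasurableSet A → A ⊆ B → ν A * μ B = μ A) ↔ μ.restrict B = μ B • ν.restrict B := by
  refine ⟨fun h ↦ Measure.ext fun A hA ↦ ?_, fun h A hA hAB ↦ ?_⟩
  · rw [Measure.restrict_apply hA, Measure.smul_apply, Measure.restrict_apply hA, smul_eq_mul,
      mul_comm, h _ (hA.inter hB) inter_subset_right]
  · have := congrArg (· A) h
    simp only [Measure.restrict_apply hA, Measure.smul_apply, smul_eq_mul,
      inter_eq_self_of_subset_left hAB] at this
    rw [this, mul_comm]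

theorem ProbabilityMeasure.restrict_eq_smul_restrict_iff {X : Type*} [MeasurableSpace X]
    (μ ν : ProbabilityMeasure X) (B : Set X) :
    μ.toFiniteMeasure.restrict B = μ B • ν.toFiniteMeasure.restrict B ↔
      (μ : Measure X).restrict B = (μ : Measure X) B • (ν : Measure X).restrict B := by
  rw [← FiniteMeasure.toMeasure_injective.eq_iff, FiniteMeasure.toMeasure_smul,
    ENNReal.smul_def ..]
  simp [ennreal_coeFn_eq_coeFn_toMeasure]

variable {Ω : Type*} [MeasurableSpace Ω] [TopologicalSpace Ω] [OpensMeasurableSpace Ω]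

theorem FiniteMeasure.continuous_restrict_of_isClopen_s2 {B : Set Ω} (hB : IsClopen B) :
    Continuous fun μ : FiniteMeasure Ω ↦ μ.restrict B := by
  refine continuous_iff_forall_continuous_lintegral.2 fun f ↦ ?_
  have hf : ∀ μ : FiniteMeasure Ω, ∫⁻ x, f x ∂(μ.restrict B : Measure Ω) =
      ∫⁻ x, (f * (BoundedContinuousFunction.indicator B hB).nnrealPart) x ∂μ := by
    intro μ
    rw [restrict_measure_eq, ← lintegral_indicator hB.isOpen.measurableSet]
    congr 1
    ext x
    by_cases hx : x ∈ B <;> simp [hx]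
  simpa only [hf] using continuous_lintegral_boundedContinuousFunction _

theorem ProbabilityMeasure.continuous_restrict_of_isClopen_s2 {B : Set Ω} (hB : IsClopen B) :
    Continuous fun μ : ProbabilityMeasure Ω ↦ μ.toFiniteMeasure.restrict B :=
  (FiniteMeasure.continuous_restrict_of_isClopen_s2 hB).comp toFiniteMeasure_continuous

theorem ProbabilityMeasure.continuous_apply_of_isClopen_s2 {B : Set Ω} (hB : IsClopen B) :
    Continuous fun μ : ProbabilityMeasure Ω ↦ μ B := by
  convert FiniteMeasure.continuous_mass.comp (continuous_restrict_of_isClopen_s2 hB) using 2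
  simp [FiniteMeasure.restrict_mass]

end MeasureTheory

section ConditionalProbabilitySystem

variable {X : Type*} [MeasurableSpace X] {𝓑 : Set (Set X)}

theorem isCPS_iff_restrict_eq_smul_restrict (h𝓑 : ∀ B ∈ 𝓑, MeasurableSet B)
    (μ : 𝓑 → ProbabilityMeasure X) :
    IsCPS 𝓑 μ ↔ (∀ B : 𝓑, μ B B = 1) ∧ ∀ B C : 𝓑, (B : Set X) ⊆ C →
      (μ C).toFiniteMeasure.restrict B = μ C B • (μ B).toFiniteMeasure.restrict B := by
  refine and_congr (forall_congr' fun B ↦ ?_) ?_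
  · rw [← ProbabilityMeasure.ennreal_coeFn_eq_coeFn_toMeasure, ENNReal.coe_eq_one]
  · simp_rw [ProbabilityMeasure.restrict_eq_smul_restrict_iff,
      ← Measure.forall_mul_eq_iff_restrict_eq (h𝓑 _ (Subtype.prop _))]
    exact ⟨fun h B C hBC A hA hAB ↦ h A B C hA hAB hBC, fun h A B C hA hAB hBC ↦ h B C hBC A hA hAB⟩

theorem isClosed_setOf_isCPS [TopologicalSpace X] [BorelSpace X] [HasOuterApproxClosed X]
    (h𝓑 : ∀ B ∈ 𝓑, IsClopen B) : IsClosed {μ : 𝓑 → ProbabilityMeasure X | IsCPS 𝓑 μ} := by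
  simp only [isCPS_iff_restrict_eq_smul_restrict fun B hB ↦ (h𝓑 B hB).isOpen.measurableSet,
    ofPred_and, ofPred_forall]
  refine .inter (isClosed_iInter fun B ↦ isClosed_eq ?_ continuous_const)
    (isClosed_iInter fun B ↦ isClosed_iInter fun C ↦ isClosed_iInter fun _ ↦ isClosed_eq ?_ ?_)
  · exact (ProbabilityMeasure.continuous_apply_of_isClopen_s2 (h𝓑 B B.2)).comp (continuous_apply B)
  · exact (ProbabilityMeasure.continuous_restrict_of_isClopen_s2 (h𝓑 B B.2)).comp (continuous_apply C)
  · exact ((ProbabilityMeasure.continuous_apply_of_isClopen_s2 (h𝓑 B B.2)).comp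
      (continuous_apply C)).smul
      ((ProbabilityMeasure.continuous_restrict_of_isClopen_s2 (h𝓑 B B.2)).comp (continuous_apply B))

end ConditionalProbabilitySystem

theorem cps_compact_iff_general {X : Type*} [TopologicalSpace X] [TopologicalSpace.MetrizableSpace X]
    [CompactSpace X] [MeasurableSpace X] [BorelSpace X]
    (𝓑 : Set (Set X))
    (hclopen : ∀ B ∈ 𝓑, IsClopen B) :
    (CompactSpace {μ : 𝓑 → ProbabilityMeasure X // IsCPS 𝓑 μ} ↔ CompactSpace X) ∧
      CompactSpace {μ : 𝓑 → ProbabilityMeasure X // IsCPS 𝓑 μ} := by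
  have hcompact : CompactSpace {μ : 𝓑 → ProbabilityMeasure X // IsCPS 𝓑 μ} :=
    isCompact_iff_compactSpace.mp (isClosed_setOf_isCPS hclopen).isCompact
  exact ⟨iff_of_true hcompact ‹CompactSpace X›, hcompact⟩

/-- For a compact metrizable `X` and a countable clopen family of conditioning events `𝓑`,
`Δ^𝓑(X)` is compact iff `X` is compact; in particular `Δ^𝓑(X)` is compact. -/
theorem cps_compact_iff {X : Type*} [TopologicalSpace X] [TopologicalSpace.MetrizableSpace X]
    [CompactSpace X] [MeasurableSpace X] [BorelSpace X]
    (𝓑 : Set (Set X)) (h𝓑ne : 𝓑.Nonempty) (h𝓑c : 𝓑.Countable)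
    (h𝓑m : ∀ B ∈ 𝓑, MeasurableSet B) (hempty : ∅ ∉ 𝓑)
    (hclopen : ∀ B ∈ 𝓑, IsClopen B) :
    (CompactSpace {μ : 𝓑 → ProbabilityMeasure X // IsCPS 𝓑 μ} ↔ CompactSpace X) ∧
      CompactSpace {μ : 𝓑 → ProbabilityMeasure X // IsCPS 𝓑 μ} :=
  cps_compact_iff_general 𝓑 hclopen
end

section
/- Let X and Y be separable metrizable spaces, B_X, B_Y countable families of conditioning events with f^{-1}(B_Y)=B_X for a Borel measurable f : X → Y, where Y is Souslin. Then the pushforward-CPS map L̄_f : Δ^{B_X}(X) → Δ^{B_Y}(Y) is Borel measurable. -/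
/-!
Approximate `f` pointwise by simple functions `Fₙ`. The law of `Fₙ` under `ν` is the finitely
supported measure with weights `ν (Fₙ⁻¹ {y})`; these weights are Borel functions of `ν` because
`ν ↦ ν G` is lower semicontinuous for open `G` (portmanteau), and finitely supported measures
depend continuously on their weights. By dominated convergence the laws of `Fₙ` converge weakly to
the law of `f`, and a pointwise limit of measurable maps into a metrizable space is measurable.
-/

open MeasureTheory Set TopologicalSpace

/-- A Souslin space: continuous image of a Polish (complete separable metrizable) space. -/
def SouslinSpace (α : Type*) [TopologicalSpace α] : Prop :=
  ∃ (β : Type) (t : TopologicalSpace β), @PolishSpace β t ∧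
    ∃ f : β → α, @Continuous β α t _ f ∧ Function.Surjective f

open scoped NNReal ENNReal Topology
open Filter

theorem IsCPS.map {X Y : Type*} [MeasurableSpace X] [MeasurableSpace Y] {𝓑X : Set (Set X)}
    {𝓑Y : Set (Set Y)} {μ : 𝓑X → ProbabilityMeasure X} (hμ : IsCPS 𝓑X μ) {f : X → Y}
    (hf : Measurable f) (h𝓑Y : ∀ B ∈ 𝓑Y, MeasurableSet B) (hmem : ∀ B ∈ 𝓑Y, f ⁻¹' B ∈ 𝓑X) :
    IsCPS 𝓑Y fun B : 𝓑Y => (μ ⟨f ⁻¹' B, hmem B.1 B.2⟩).map hf.aemeasurable := by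
  refine ⟨fun B => ?_, fun A B C hA hAB hBC => ?_⟩
  · rw [ProbabilityMeasure.toMeasure_map, Measure.map_apply hf (h𝓑Y B.1 B.2)]
    exact hμ.1 _
  · simp only [ProbabilityMeasure.toMeasure_map, Measure.map_apply hf hA,
      Measure.map_apply hf (h𝓑Y B.1 B.2)]
    exact hμ.2 _ _ _ (hf hA) (preimage_mono hAB) (preimage_mono hBC)

namespace MeasureTheory.ProbabilityMeasure

section Borel

variable {Z : Type*} [MeasurableSpace Z] [TopologicalSpace Z]

theorem lowerSemicontinuous_apply_of_isOpen [OpensMeasurableSpace Z] [HasOuterApproxClosed Z]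
    {G : Set Z} (hG : IsOpen G) :
    LowerSemicontinuous fun ν : ProbabilityMeasure Z => (ν : Measure Z) G :=
  lowerSemicontinuous_iff_le_liminf.2 fun _ => le_liminf_measure_open_of_tendsto tendsto_id hG

theorem measurable_toMeasure_of_borel [HasOuterApproxClosed Z] [BorelSpace Z] :
    @Measurable (ProbabilityMeasure Z) (Measure Z) (borel _) _ (↑) := by
  borelize (ProbabilityMeasure Z)
  exact .measure_of_isPiSystem_of_isProbabilityMeasure BorelSpace.measurable_eq isPiSystem_isOpen
    fun _ hG => (lowerSemicontinuous_apply_of_isOpen hG).measurable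

end Borel

section Simplex

variable {Y ι : Type*} [MeasurableSpace Y] [Fintype ι]

noncomputable def ofSimplex (p : ι → Y) (w : stdSimplex ℝ≥0 ι) : ProbabilityMeasure Y :=
  ⟨∑ i, (w.1 i : ℝ≥0∞) • Measure.dirac (p i), ⟨by
    simp [← ENNReal.ofNNReal_finsetSum, w.2.2]⟩⟩

theorem lintegral_ofSimplex (p : ι → Y) (w : stdSimplex ℝ≥0 ι) {g : Y → ℝ≥0∞}
    (hg : Measurable g) :
    ∫⁻ y, g y ∂(ofSimplex p w : Measure Y) = ∑ i, (w.1 i : ℝ≥0∞) * g (p i) := by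
  simp only [ofSimplex, coe_mk, lintegral_finsetSum_measure, lintegral_smul_measure,
    lintegral_dirac' _ hg, smul_eq_mul]

theorem continuous_ofSimplex [TopologicalSpace Y] [OpensMeasurableSpace Y] (p : ι → Y) :
    Continuous (ofSimplex p) := by
  refine continuous_iff_continuousAt.2 fun w => ?_
  refine tendsto_iff_forall_lintegral_tendsto.2 fun g => ?_
  simp_rw [lintegral_ofSimplex p _ g.continuous.measurable.coe_nnreal_ennreal]
  refine Continuous.tendsto ?_ w
  exact continuous_finsetSum _ fun i _ => (ENNReal.continuous_mul_const ENNReal.coe_ne_top).comp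
    (ENNReal.continuous_coe.comp ((continuous_apply i).comp continuous_subtype_val))

end Simplex

end MeasureTheory.ProbabilityMeasure

namespace MeasureTheory.SimpleFunc

variable {X Y : Type*} [MeasurableSpace X]

noncomputable def fiberMass (F : SimpleFunc X Y) (ν : ProbabilityMeasure X) :
    stdSimplex ℝ≥0 F.range :=
  ⟨fun y => ν (F ⁻¹' {y.1}), fun _ => zero_le, by
    apply ENNReal.coe_injective
    push_cast [ProbabilityMeasure.ennreal_coeFn_eq_coeFn_toMeasure]
    rw [Finset.sum_coe_sort F.range fun y => (ν : Measure X) (F ⁻¹' {y}),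
      F.sum_range_measure_preimage_singleton, measure_univ]⟩

theorem map_eq_ofSimplex [MeasurableSpace Y] [MeasurableSingletonClass Y] (F : SimpleFunc X Y)
    (ν : ProbabilityMeasure X) :
    ν.map F.measurable.aemeasurable = ProbabilityMeasure.ofSimplex (↑) (F.fiberMass ν) := by
  apply ProbabilityMeasure.toMeasure_injective
  rw [ProbabilityMeasure.toMeasure_map,
    (Measure.ae_mem_finset_iff_map_eq_sum_dirac F.measurable.aemeasurable).1
      (ae_of_all _ F.mem_range_self),
    ← Finset.sum_coe_sort]
  simp [ProbabilityMeasure.ofSimplex, fiberMass,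
    ProbabilityMeasure.ennreal_coeFn_eq_coeFn_toMeasure]

theorem measurable_fiberMass [TopologicalSpace X] [HasOuterApproxClosed X] [BorelSpace X]
    (F : SimpleFunc X Y) : @Measurable _ _ (borel _) _ F.fiberMass := by
  borelize (ProbabilityMeasure X)
  refine Measurable.subtype_mk <| measurable_pi_lambda _ fun y => ?_
  exact ((Measure.measurable_coe (F.measurableSet_fiber y)).comp
      ProbabilityMeasure.measurable_toMeasure_of_borel).ennreal_toNNReal

end MeasureTheory.SimpleFunc

instance TopologicalSpace.pseudoMetrizableSpace_pi_of_countable {ι : Type*} [Countable ι]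
    {A : ι → Type*} [∀ i, TopologicalSpace (A i)] [∀ i, PseudoMetrizableSpace (A i)] :
    PseudoMetrizableSpace (∀ i, A i) :=
  let := fun i => pseudoMetrizableSpaceUniformity (A i)
  have := fun i => pseudoMetrizableSpaceUniformity_countably_generated (A i)
  inferInstance

namespace MeasureTheory.ProbabilityMeasure

/-- The Borel σ-algebra of `ι → ProbabilityMeasure Y` is not known to be the product σ-algebra, so
the approximants are shown measurable by factoring them continuously through the second countable
space `ι → stdSimplex ℝ≥0 _` of fibre masses. -/
theorem measurable_pi_map_of_borel {ι X Y : Type*} [Countable ι] [MeasurableSpace X]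
    [TopologicalSpace X] [HasOuterApproxClosed X] [BorelSpace X] [TopologicalSpace Y]
    [MetrizableSpace Y] [SeparableSpace Y] [MeasurableSpace Y] [BorelSpace Y] {f : X → Y}
    (hf : Measurable f) :
    @Measurable (ι → ProbabilityMeasure X) (ι → ProbabilityMeasure Y) (borel _) (borel _)
      fun ν i => (ν i).map hf.aemeasurable := by
  borelize (ProbabilityMeasure X) (ι → ProbabilityMeasure X) (ι → ProbabilityMeasure Y)
  have hfs : StronglyMeasurable f :=
    stronglyMeasurable_iff_measurable_separable.2 ⟨hf, .of_separableSpace _⟩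
  refine measurable_of_tendsto_metrizable' atTop
    (f := fun n ν i => (ν i).map (hfs.approx n).measurable.aemeasurable) (fun n => ?_) ?_
  · simp_rw [SimpleFunc.map_eq_ofSimplex]
    have hcont : Continuous fun (w : ι → stdSimplex ℝ≥0 (hfs.approx n).range) i =>
        ofSimplex ((↑) : (hfs.approx n).range → Y) (w i) :=
      _root_.continuous_pi fun i => (continuous_ofSimplex _).comp (continuous_apply i)
    exact hcont.measurable.comp <| measurable_pi_lambda _ fun i =>
      (SimpleFunc.measurable_fiberMass _).comp (continuous_apply i).measurable
  · refine tendsto_pi_nhds.2 fun ν => tendsto_pi_nhds.2 fun i => ?_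
    exact (tendstoInDistribution_of_ae_tendsto (fun n => by fun_prop) hf.aemeasurable
      (ae_of_all _ hfs.tendsto_approx)).tendsto

end MeasureTheory.ProbabilityMeasure

theorem pushforward_cps_measurable_general {X Y : Type*}
    [TopologicalSpace X] [MetrizableSpace X] [MeasurableSpace X] [BorelSpace X]
    [TopologicalSpace Y] [MetrizableSpace Y] [SeparableSpace Y] [MeasurableSpace Y] [BorelSpace Y]
    (𝓑X : Set (Set X)) (𝓑Y : Set (Set Y))
    (h𝓑Yc : 𝓑Y.Countable)
    (h𝓑Ym : ∀ B ∈ 𝓑Y, MeasurableSet B)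
    (f : X → Y) (hf : Measurable f)
    (hmem : ∀ B ∈ 𝓑Y, f ⁻¹' B ∈ 𝓑X) :
    (∀ μ : {μ : 𝓑X → ProbabilityMeasure X // IsCPS 𝓑X μ},
      IsCPS 𝓑Y (fun B : 𝓑Y =>
        (μ.val ⟨f ⁻¹' (B : Set Y), hmem B.1 B.2⟩).map hf.aemeasurable)) ∧
    @Measurable {μ : 𝓑X → ProbabilityMeasure X // IsCPS 𝓑X μ} (𝓑Y → ProbabilityMeasure Y)
      (borel _) (borel _)
      (fun μ (B : 𝓑Y) =>
        (μ.val ⟨f ⁻¹' (B : Set Y), hmem B.1 B.2⟩).map hf.aemeasurable) := by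
  refine ⟨fun μ => μ.2.map hf h𝓑Ym hmem, ?_⟩
  have : Countable 𝓑Y := h𝓑Yc.to_subtype
  borelize {μ : 𝓑X → ProbabilityMeasure X // IsCPS 𝓑X μ} (𝓑Y → ProbabilityMeasure X)
  have hrestrict : Continuous fun (μ : {μ : 𝓑X → ProbabilityMeasure X // IsCPS 𝓑X μ}) (B : 𝓑Y) =>
      μ.val ⟨f ⁻¹' B, hmem B.1 B.2⟩ :=
    continuous_pi fun B => (continuous_apply _).comp continuous_subtype_val
  exact (ProbabilityMeasure.measurable_pi_map_of_borel hf).comp hrestrict.measurable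

/-- For Borel measurable `f : X → Y` with `f⁻¹(𝓑_Y) = 𝓑_X` (`X`, `Y` separable metrizable, `Y`
Souslin, countable conditioning families), the pushforward-CPS map
`L̄_f : Δ^{𝓑_X}(X) → Δ^{𝓑_Y}(Y)` is well-defined and Borel measurable (Borel σ-algebras of the
weak topologies). -/
theorem pushforward_cps_measurable {X Y : Type*}
    [TopologicalSpace X] [MetrizableSpace X] [SeparableSpace X] [MeasurableSpace X] [BorelSpace X]
    [TopologicalSpace Y] [MetrizableSpace Y] [SeparableSpace Y] [MeasurableSpace Y] [BorelSpace Y]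
    (hYsouslin : SouslinSpace Y)
    (𝓑X : Set (Set X)) (𝓑Y : Set (Set Y))
    (h𝓑Xne : 𝓑X.Nonempty) (h𝓑Yne : 𝓑Y.Nonempty)
    (h𝓑Xc : 𝓑X.Countable) (h𝓑Yc : 𝓑Y.Countable)
    (h𝓑Xm : ∀ B ∈ 𝓑X, MeasurableSet B) (h𝓑Ym : ∀ B ∈ 𝓑Y, MeasurableSet B)
    (hXempty : ∅ ∉ 𝓑X) (hYempty : ∅ ∉ 𝓑Y)
    (f : X → Y) (hf : Measurable f)
    (hpre : (fun B => f ⁻¹' B) '' 𝓑Y = 𝓑X)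
    (hmem : ∀ B ∈ 𝓑Y, f ⁻¹' B ∈ 𝓑X) :
    (∀ μ : {μ : 𝓑X → ProbabilityMeasure X // IsCPS 𝓑X μ},
      IsCPS 𝓑Y (fun B : 𝓑Y =>
        (μ.val ⟨f ⁻¹' (B : Set Y), hmem B.1 B.2⟩).map hf.aemeasurable)) ∧
    @Measurable {μ : 𝓑X → ProbabilityMeasure X // IsCPS 𝓑X μ} (𝓑Y → ProbabilityMeasure Y)
      (borel _) (borel _)
      (fun μ (B : 𝓑Y) =>
        (μ.val ⟨f ⁻¹' (B : Set Y), hmem B.1 B.2⟩).map hf.aemeasurable) :=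
  pushforward_cps_measurable_general 𝓑X 𝓑Y h𝓑Yc h𝓑Ym f hf hmem
end

section
/- Let X be a metrizable Souslin (resp. Lusin) space and C a countable family of Borel subsets of X. Then there exists a finer metrizable Souslin (resp. Lusin) topology on X generating the same Borel σ-algebra and making each set in C both closed and open. -/
open MeasureTheory Set TopologicalSpace

/-- A Lusin space: continuous bijective image of a Polish space. -/
def LusinSpace (α : Type*) [TopologicalSpace α] : Prop :=
  ∃ (β : Type) (t : TopologicalSpace β), @PolishSpace β t ∧
    ∃ f : β → α, @Continuous β α t _ f ∧ Function.Bijective f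

/-!
Let `χ : X → (𝓒 → Bool)` record membership in the sets of `𝓒` and pull back the product topology
along the graph embedding `x ↦ (x, χ x)` into `X × (𝓒 → Bool)`. This is the coarsest topology finer
than the given one making `χ` continuous; it is metrizable and makes each `C ∈ 𝓒` clopen. As `χ` is
Borel and both factors are second countable, the graph embedding is Borel, so no Borel sets are
added. If a Polish `β` maps continuously onto `X` by `f`, then `χ ∘ f` is Borel, so `β` carries a
finer Polish topology in which `χ ∘ f` is continuous; `f` is then continuous for the new topology
on `X` and still surjective (resp. bijective).
-/

open Topology

lemma SouslinSpace.secondCountableTopology {X : Type*} [TopologicalSpace X] [MetrizableSpace X]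
    (hX : SouslinSpace X) : SecondCountableTopology X := by
  obtain ⟨β, tβ, hβ, f, hf, hsurj⟩ := hX
  have : LindelofSpace X := isLindelof_univ_iff.1 (hsurj.range_eq ▸ isLindelof_range hf)
  infer_instance

section GraphTopology

variable {X Y : Type*} [t : TopologicalSpace X] [TopologicalSpace Y] (g : X → Y)

/-- Equal to `t ⊓ induced g ‹TopologicalSpace Y›`. -/
abbrev graphTopology : TopologicalSpace X :=
  induced (fun x => (x, g x)) inferInstance

lemma continuous_graph_graphTopology :
    Continuous[graphTopology g, _] fun x => (x, g x) :=
  continuous_induced_dom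

lemma graphTopology_le : graphTopology g ≤ t :=
  continuous_id_iff_le.1 <|
    @Continuous.comp _ _ _ (graphTopology g) _ t _ _ continuous_fst
      (continuous_graph_graphTopology g)

lemma continuous_graphTopology : Continuous[graphTopology g, _] g :=
  have h : Continuous[graphTopology g, _] (Prod.snd ∘ fun x => (x, g x)) :=
    @Continuous.comp _ _ _ (graphTopology g) _ _ _ _ continuous_snd
      (continuous_graph_graphTopology g)
  h

lemma continuous_graphTopology_iff {β : Type*} [TopologicalSpace β] {f : β → X} :
    Continuous[_, graphTopology g] f ↔ Continuous f ∧ Continuous (g ∘ f) :=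
  continuous_induced_rng.trans continuous_prodMk

lemma isEmbedding_graphTopology :
    @IsEmbedding X (X × Y) (graphTopology g) _ (fun x => (x, g x)) :=
  @IsEmbedding.mk _ _ (graphTopology g) _ _ (@IsInducing.mk _ _ (graphTopology g) _ _ rfl)
    fun _ _ h => congrArg Prod.fst h

lemma metrizableSpace_graphTopology [MetrizableSpace X] [MetrizableSpace Y] :
    @MetrizableSpace X (graphTopology g) :=
  @IsEmbedding.metrizableSpace X (X × Y) (graphTopology g) _ _ _
    (isEmbedding_graphTopology g)

lemma borel_graphTopology [SecondCountableTopology X] [SecondCountableTopology Y]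
    [MeasurableSpace Y] [BorelSpace Y] (hg : Measurable[borel X] g) :
    @borel X (graphTopology g) = borel X := by
  refine le_antisymm ?_ (borel_anti (graphTopology_le g))
  let : MeasurableSpace X := borel X
  have : BorelSpace X := ⟨rfl⟩
  rw [graphTopology, borel_comap, ← (Prod.borelSpace (α := X) (β := Y)).measurable_eq]
  exact (measurable_id.prodMk hg).comap_le

variable [SecondCountableTopology Y] [MeasurableSpace Y] [OpensMeasurableSpace Y]

lemma exists_polishSpace_continuous_graphTopology {β : Type*} [TopologicalSpace β]
    [PolishSpace β] {f : β → X} (hf : Continuous f) (hg : Measurable[borel X] g) :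
    ∃ tβ : TopologicalSpace β, @PolishSpace β tβ ∧ Continuous[tβ, graphTopology g] f := by
  let : MeasurableSpace β := borel β
  have : BorelSpace β := ⟨rfl⟩
  let : MeasurableSpace X := borel X
  have : BorelSpace X := ⟨rfl⟩
  obtain ⟨tβ, hle, hgf, hpolish⟩ := (hg.comp hf.measurable).exists_continuous
  exact ⟨tβ, hpolish, (continuous_graphTopology_iff g).2 ⟨continuous_le_dom hle hf, hgf⟩⟩

lemma SouslinSpace.graphTopology (hX : SouslinSpace X) (hg : Measurable[borel X] g) :
    @SouslinSpace X (graphTopology g) := by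
  obtain ⟨β, tβ, hβ, f, hf, hsurj⟩ := hX
  obtain ⟨tβ', hpolish, hf'⟩ := exists_polishSpace_continuous_graphTopology g hf hg
  exact ⟨β, tβ', hpolish, f, hf', hsurj⟩

lemma LusinSpace.graphTopology (hX : LusinSpace X) (hg : Measurable[borel X] g) :
    @LusinSpace X (graphTopology g) := by
  obtain ⟨β, tβ, hβ, f, hf, hbij⟩ := hX
  obtain ⟨tβ', hpolish, hf'⟩ := exists_polishSpace_continuous_graphTopology g hf hg
  exact ⟨β, tβ', hpolish, f, hf', hbij⟩

end GraphTopology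

lemma measurable_boolIndicator_pi {X : Type*} [MeasurableSpace X] {𝓒 : Set (Set X)}
    (h𝓒 : ∀ C ∈ 𝓒, MeasurableSet C) :
    Measurable fun x (C : 𝓒) => (C : Set X).boolIndicator x :=
  measurable_pi_iff.2 fun C => measurable_to_bool <| by
    simpa only [preimage_boolIndicator_true] using h𝓒 C C.2

/-- For a metrizable Souslin space `X` and a countable family `𝓒` of Borel subsets, there is a
finer metrizable Souslin topology on `X` with the same Borel σ-algebra making every `C ∈ 𝓒`
clopen; if `X` is moreover Lusin, the finer topology can be taken Lusin. -/
theorem exists_finer_souslin_topology {X : Type*} [t : TopologicalSpace X]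
    [@MetrizableSpace X t] (hX : @SouslinSpace X t)
    (𝓒 : Set (Set X)) (h𝓒c : 𝓒.Countable) (h𝓒m : ∀ C ∈ 𝓒, MeasurableSet[borel X] C) :
    ∃ t' : TopologicalSpace X, t' ≤ t ∧ @MetrizableSpace X t' ∧ @SouslinSpace X t' ∧
      @borel X t' = @borel X t ∧ (∀ C ∈ 𝓒, @IsClopen X t' C) ∧
      (@LusinSpace X t → @LusinSpace X t') := by
  have : Countable 𝓒 := h𝓒c.to_subtype
  have : SecondCountableTopology X := hX.secondCountableTopology
  set χ : X → 𝓒 → Bool := fun x C => (C : Set X).boolIndicator x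
  have hχ : Measurable[borel X] χ := @measurable_boolIndicator_pi X (borel X) 𝓒 h𝓒m
  refine ⟨graphTopology χ, graphTopology_le χ, metrizableSpace_graphTopology χ,
    hX.graphTopology χ hχ, borel_graphTopology χ hχ, fun C hC => ?_,
    fun hL => hL.graphTopology χ hχ⟩
  exact (@continuous_boolIndicator_iff_isClopen X (graphTopology χ) C).1
    (@Continuous.comp _ _ _ (graphTopology χ) _ _ _ _ (continuous_apply (⟨C, hC⟩ : 𝓒))
      (continuous_graphTopology χ))
end

section
/- Let X₁, X₂, Y₁, Y₂ be separable metrizable (Souslin) spaces and f₁ : X₁ → Y₁, f₂ : X₂ → Y₂ universally measurable functions. Then f := (f₁, f₂) : X₁×X₂ → Y₁×Y₂ is universally measurable. -/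
open MeasureTheory Set TopologicalSpace

/-- `f` is universally measurable: for every (Borel) probability measure `μ` on the domain, the
preimage of every measurable set is measurable with respect to the `μ`-completion. -/
def UnivMeasurable {α β : Type*} [MeasurableSpace α] [MeasurableSpace β] (f : α → β) : Prop :=
  ∀ μ : Measure α, IsProbabilityMeasure μ →
    ∀ E : Set β, MeasurableSet E → NullMeasurableSet (f ⁻¹' E) μ

namespace UnivMeasurable

variable {Ω α β : Type*} [MeasurableSpace Ω] [MeasurableSpace α] [MeasurableSpace β]

theorem nullMeasurable {f : α → β} (hf : UnivMeasurable f) (μ : Measure α)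
    [IsProbabilityMeasure μ] : NullMeasurable f μ :=
  fun _ hE => hf μ ‹_› _ hE

/-- The pushforward `μ.map g` is again a probability measure, and `g` is quasi-measure-preserving
from `μ` to it, so `μ.map g`-null sets pull back to `μ`-null sets. -/
theorem comp_measurable {f : α → β} {g : Ω → α} (hf : UnivMeasurable f) (hg : Measurable g) :
    UnivMeasurable (f ∘ g) := by
  intro μ _ E hE
  have : IsProbabilityMeasure (μ.map g) := Measure.isProbabilityMeasure_map hg.aemeasurable
  exact (hf.nullMeasurable (μ.map g) hE).preimage (hg.quasiMeasurePreserving μ)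

/-- `NullMeasurable f μ` is measurability for the `μ`-completion of the σ-algebra of `Ω`, so
`Measurable.prodMk` applies. -/
theorem prodMk {f : Ω → α} {g : Ω → β} (hf : UnivMeasurable f) (hg : UnivMeasurable g) :
    UnivMeasurable fun x => (f x, g x) :=
  fun μ _ _ hE => Measurable.prodMk (hf.nullMeasurable μ) (hg.nullMeasurable μ) hE

end UnivMeasurable

theorem univMeasurable_prod_map_general {X₁ X₂ Y₁ Y₂ : Type*}
    [MeasurableSpace X₁]
    [MeasurableSpace X₂]
    [MeasurableSpace Y₁]
    [MeasurableSpace Y₂]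
    (f₁ : X₁ → Y₁) (f₂ : X₂ → Y₂)
    (h₁ : UnivMeasurable f₁) (h₂ : UnivMeasurable f₂) :
    UnivMeasurable (Prod.map f₁ f₂) :=
  (h₁.comp_measurable measurable_fst).prodMk (h₂.comp_measurable measurable_snd)

/-- If `X₁, X₂, Y₁, Y₂` are separable metrizable Souslin spaces and `f₁ : X₁ → Y₁`,
`f₂ : X₂ → Y₂` are universally measurable, then `(f₁, f₂) : X₁ × X₂ → Y₁ × Y₂` is universally
measurable. -/
theorem univMeasurable_prod_map {X₁ X₂ Y₁ Y₂ : Type*}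
    [TopologicalSpace X₁] [MetrizableSpace X₁] [SeparableSpace X₁] [MeasurableSpace X₁]
    [BorelSpace X₁]
    [TopologicalSpace X₂] [MetrizableSpace X₂] [SeparableSpace X₂] [MeasurableSpace X₂]
    [BorelSpace X₂]
    [TopologicalSpace Y₁] [MetrizableSpace Y₁] [SeparableSpace Y₁] [MeasurableSpace Y₁]
    [BorelSpace Y₁]
    [TopologicalSpace Y₂] [MetrizableSpace Y₂] [SeparableSpace Y₂] [MeasurableSpace Y₂]
    [BorelSpace Y₂]
    (hX₁ : SouslinSpace X₁) (hX₂ : SouslinSpace X₂)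
    (hY₁ : SouslinSpace Y₁) (hY₂ : SouslinSpace Y₂)
    (f₁ : X₁ → Y₁) (f₂ : X₂ → Y₂)
    (h₁ : UnivMeasurable f₁) (h₂ : UnivMeasurable f₂) :
    UnivMeasurable (Prod.map f₁ f₂) :=
  univMeasurable_prod_map_general f₁ f₂ h₁ h₂
end

section
/- Let (Y_n, f_{m,n}) be a projective sequence of Hausdorff Souslin spaces with surjective continuous bonding maps. Then the projective limit Y = lim← Y_n is a nonempty Souslin space, each canonical projection f̄_n : Y → Y_n is continuous and surjective, and the Borel σ-algebra of Y is generated by the algebra ∪_n f̄_n^{-1}(Borel(Y_n)). -/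
open MeasureTheory Set

/-!
The limit is the closed subset of threads in `∏ Yₙ`, hence Souslin. A point of `Y k` lifts to a
thread by projecting it down to the levels below `k` and choosing preimages step by step above
`k`. A Souslin space is hereditarily Lindelöf, so every open subset of the limit is a countable
union of finite intersections of open cylinders `f̄ₖ⁻¹(U)`; this puts the Borel sets into the
σ-algebra generated by the cylinders.
-/

namespace SouslinSpace

variable {α : Type*} [TopologicalSpace α]

theorem hereditarilyLindelofSpace (h : SouslinSpace α) : HereditarilyLindelofSpace α := by
  obtain ⟨β, t, hβ, g, hg, hgs⟩ := h
  refine HereditarilyLindelofSpace.of_forall_isOpen fun s _ => ?_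
  rw [← image_preimage_eq s hgs]
  exact (@HereditarilyLindelofSpace.isLindelof β t _ (g ⁻¹' s)).image hg

theorem pi {ι : Type} [Countable ι] {X : ι → Type*} [∀ i, TopologicalSpace (X i)]
    (h : ∀ i, SouslinSpace (X i)) : SouslinSpace (∀ i, X i) := by
  choose β t hβ g hg hgs using h
  exact ⟨∀ i, β i, inferInstance, inferInstance, Pi.map g, .piMap hg, .piMap hgs⟩

end SouslinSpace

theorem IsClosed.souslinSpace {α : Type*} [TopologicalSpace α] {s : Set α} (hs : IsClosed s)
    (h : SouslinSpace α) : SouslinSpace s := by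
  obtain ⟨β, t, hβ, g, hg, hgs⟩ := h
  exact ⟨g ⁻¹' s, inferInstance, (hs.preimage hg).polishSpace, s.restrictPreimage g,
    hg.restrictPreimage, hgs.restrictPreimage s⟩

theorem borel_eq_generateFrom_of_subbasis_of_hereditarilyLindelof {X : Type*} {s : Set (Set X)}
    [t : TopologicalSpace X] [HereditarilyLindelofSpace X] (hs : t = .generateFrom s) :
    borel X = .generateFrom s := by
  refine le_antisymm (MeasurableSpace.generateFrom_le fun u hu => ?_)
    (MeasurableSpace.generateFrom_le fun u hu => MeasurableSpace.measurableSet_generateFrom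
      (show t.IsOpen u by rw [hs]; exact TopologicalSpace.isOpen_generateFrom_of_mem hu))
  rw [hs] at hu
  induction hu with
  | basic u hu => exact MeasurableSpace.measurableSet_generateFrom hu
  | univ => exact MeasurableSet.univ
  | inter _ _ _ _ h₁ h₂ => exact h₁.inter h₂
  | sUnion S hS ih =>
    obtain ⟨T, hTc, hTS⟩ := eq_open_union_countable (fun u : S => (u : Set X))
      fun u => by rw [hs]; exact hS u u.2
    rw [sUnion_eq_iUnion, ← hTS]
    exact .biUnion hTc fun u _ => ih u u.2

theorem instTopologicalSpaceSubtype_pi_eq_generateFrom {ι : Type*} {Z : ι → Type*}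
    [∀ i, TopologicalSpace (Z i)] (p : (∀ i, Z i) → Prop) :
    (instTopologicalSpaceSubtype : TopologicalSpace {y // p y}) = .generateFrom
      {s | ∃ i, ∃ U : Set (Z i), IsOpen U ∧ s = (fun y : {y // p y} => y.val i) ⁻¹' U} := by
  rw [instTopologicalSpaceSubtype, Pi.topologicalSpace, induced_iInf]
  simp only [induced_compose]
  rw [← generateFrom_iUnion_isOpen]
  congr 1
  ext s
  simp only [mem_iUnion, mem_ofPred_eq, isOpen_induced_iff, eq_comm]
  rfl

section ProjectiveLimit

variable {Y : ℕ → Type*} (f : ∀ m n, m ≤ n → Y n → Y m)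

abbrev IsThread (y : ∀ n, Y n) : Prop := ∀ m n (h : m ≤ n), f m n h (y n) = y m

variable {f}

theorem isThread_of_succ (hid : ∀ n, f n n le_rfl = id)
    (hcomp : ∀ m n p (hmn : m ≤ n) (hnp : n ≤ p),
      f m p (le_trans hmn hnp) = f m n hmn ∘ f n p hnp)
    {y : ∀ n, Y n} (hy : ∀ n, f n (n + 1) n.le_succ (y (n + 1)) = y n) : IsThread f y := by
  intro m n h
  induction n, h using Nat.le_induction with
  | base => rw [hid]; rfl
  | succ n hmn ih => rw [hcomp m n (n + 1) hmn n.le_succ, Function.comp_apply, hy, ih]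

theorem surjective_thread_eval (hsurj : ∀ m n (h : m ≤ n), Function.Surjective (f m n h))
    (hid : ∀ n, f n n le_rfl = id)
    (hcomp : ∀ m n p (hmn : m ≤ n) (hnp : n ≤ p),
      f m p (le_trans hmn hnp) = f m n hmn ∘ f n p hnp) (k : ℕ) :
    Function.Surjective fun y : {y // IsThread f y} => y.val k := by
  intro yk
  let y : ∀ n, Y n := fun n => Nat.rec (motive := Y) (f 0 k k.zero_le yk)
    (fun n yn => if h : n + 1 ≤ k then f (n + 1) k h yk
      else Function.surjInv (hsurj n (n + 1) n.le_succ) yn) n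
  have below : ∀ n (h : n ≤ k), y n = f n k h yk := by
    intro n h
    cases n with
    | zero => rfl
    | succ n => exact dif_pos h
  refine ⟨⟨y, isThread_of_succ hid hcomp fun n => ?_⟩, ?_⟩
  · by_cases h : n + 1 ≤ k
    · rw [below (n + 1) h, below n (by omega), ← Function.comp_apply (f := f n (n + 1) _),
        ← hcomp]
    · exact (congrArg _ (dif_neg h)).trans (Function.surjInv_eq _ _)
  · change y k = yk
    rw [below k le_rfl, hid]
    rfl

theorem isClosed_setOf_isThread [∀ n, TopologicalSpace (Y n)] [∀ n, T2Space (Y n)]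
    (hcont : ∀ m n (h : m ≤ n), Continuous (f m n h)) : IsClosed {y | IsThread f y} := by
  simp only [IsThread, ofPred_forall]
  exact isClosed_iInter fun m => isClosed_iInter fun n => isClosed_iInter fun h =>
    isClosed_eq ((hcont m n h).comp (continuous_apply n)) (continuous_apply m)

end ProjectiveLimit

/-- For a projective sequence of nonempty Hausdorff Souslin spaces with continuous surjective
bonding maps, the projective limit is a nonempty Souslin space, the canonical projections are
continuous surjections, and its Borel σ-algebra is generated by the cylinder algebra
`⋃ n, f̄ₙ⁻¹(Borel(Y n))`. -/
theorem projective_limit_souslin (Y : ℕ → Type*)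
    [∀ n, TopologicalSpace (Y n)] [∀ n, T2Space (Y n)] [∀ n, Nonempty (Y n)]
    (hY : ∀ n, SouslinSpace (Y n))
    (f : ∀ m n, m ≤ n → Y n → Y m)
    (hcont : ∀ m n (h : m ≤ n), Continuous (f m n h))
    (hsurj : ∀ m n (h : m ≤ n), Function.Surjective (f m n h))
    (hid : ∀ n, f n n le_rfl = id)
    (hcomp : ∀ m n p (hmn : m ≤ n) (hnp : n ≤ p),
      f m p (le_trans hmn hnp) = f m n hmn ∘ f n p hnp) :
    Nonempty {y : ∀ n, Y n // ∀ m n (h : m ≤ n), f m n h (y n) = y m} ∧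
    SouslinSpace {y : ∀ n, Y n // ∀ m n (h : m ≤ n), f m n h (y n) = y m} ∧
    (∀ k, Continuous (fun y : {y : ∀ n, Y n // ∀ m n (h : m ≤ n), f m n h (y n) = y m} =>
        y.val k) ∧
      Function.Surjective
        (fun y : {y : ∀ n, Y n // ∀ m n (h : m ≤ n), f m n h (y n) = y m} => y.val k)) ∧
    borel {y : ∀ n, Y n // ∀ m n (h : m ≤ n), f m n h (y n) = y m} =
      MeasurableSpace.generateFrom
        {s | ∃ (k : ℕ) (E : Set (Y k)), MeasurableSet[borel (Y k)] E ∧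
          s = (fun y : {y : ∀ n, Y n // ∀ m n (h : m ≤ n), f m n h (y n) = y m} =>
            y.val k) ⁻¹' E} := by
  have hsurjL := surjective_thread_eval hsurj hid hcomp
  have hcontL : ∀ k, Continuous fun y : {y // IsThread f y} => y.val k := fun k =>
    (continuous_apply k).comp continuous_subtype_val
  have hL : SouslinSpace {y // IsThread f y} :=
    (isClosed_setOf_isThread hcont).souslinSpace (SouslinSpace.pi hY)
  have := hL.hereditarilyLindelofSpace
  refine ⟨(hsurjL 0).nonempty, hL, fun k => ⟨hcontL k, hsurjL k⟩, le_antisymm ?_ ?_⟩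
  · rw [borel_eq_generateFrom_of_subbasis_of_hereditarilyLindelof
      (instTopologicalSpaceSubtype_pi_eq_generateFrom _)]
    exact MeasurableSpace.generateFrom_mono fun s ⟨k, U, hU, hs⟩ =>
      ⟨k, U, MeasurableSpace.measurableSet_generateFrom hU, hs⟩
  · exact MeasurableSpace.generateFrom_le fun s ⟨k, E, hE, hs⟩ =>
      hs ▸ (hcontL k).borel_measurable hE
end

section
/- Consider the type structure where S = {s} is a singleton, I = {a,b}, T_a = {t_a', t_a''}, T_b = {t_b}, with β_a(t_a')({(s,t_b)}) = β_a(t_a'')({(s,t_b)}) = 1 and β_b(t_b)({(s,t_a')}) = 1. Then the hierarchy maps h_a, h_b are constant (every type generates the unique hierarchy of point-mass beliefs), so this structure is terminal (its hierarchy images equal the full canonical hierarchy spaces), but β_b is not surjective onto Δ(S × T_a), so the structure is not complete. -/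
open MeasureTheory Set

noncomputable section

/-- Borel probability measures on a topological space `W` (with `borel W`). -/
def PMb (W : Type) [TopologicalSpace W] : Type := @ProbabilityMeasure W (borel W)

instance (W : Type) [TopologicalSpace W] : TopologicalSpace (PMb W) :=
  letI : MeasurableSpace W := borel W
  haveI : BorelSpace W := ⟨rfl⟩
  (inferInstance : TopologicalSpace (ProbabilityMeasure W))

/-- A conditional probability system on `S × W` whose conditioning events are the cylinders
`B × W`, `B ∈ 𝓑` (Convention 1). -/
def IsCPScyl (S : Type) [TopologicalSpace S] (𝓑 : Set (Set S)) (W : Type) [TopologicalSpace W]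
    (μ : 𝓑 → PMb (S × W)) : Prop :=
  letI : MeasurableSpace (S × W) := borel (S × W)
  (∀ B : 𝓑, (μ B).val ((B : Set S) ×ˢ (univ : Set W)) = 1) ∧
  ∀ (A : Set (S × W)) (B C : 𝓑), MeasurableSet A → A ⊆ (B : Set S) ×ˢ (univ : Set W) →
    (B : Set S) ⊆ (C : Set S) →
    (μ B).val A * (μ C).val ((B : Set S) ×ˢ (univ : Set W)) = (μ C).val A

/-- `Δ^𝓑(S × W)`: the space of conditional probability systems on `S × W` with cylinder
conditioning events generated by `𝓑`. -/
def CPSc (S : Type) [TopologicalSpace S] (𝓑 : Set (Set S)) (W : Type) [TopologicalSpace W] :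
    Type :=
  {μ : 𝓑 → PMb (S × W) // IsCPScyl S 𝓑 W μ}

instance (S : Type) [TopologicalSpace S] (𝓑 : Set (Set S)) (W : Type) [TopologicalSpace W] :
    TopologicalSpace (CPSc S 𝓑 W) :=
  inferInstanceAs (TopologicalSpace {μ : 𝓑 → PMb (S × W) // IsCPScyl S 𝓑 W μ})

/-- Pushforward of a Borel measure along a map between topological spaces. -/
def mapb {α β : Type} [TopologicalSpace α] [TopologicalSpace β] (g : α → β)
    (m : @Measure α (borel α)) : @Measure β (borel β) :=
  @Measure.map α β (borel α) (borel β) g m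

/-- Coherence: the image conditional law of `ν` under `(Id_S, π)` is `ν'` (componentwise, as
an equality of Borel measures). -/
def Coh (S : Type) [TopologicalSpace S] (𝓑 : Set (Set S)) {W W' : Type} [TopologicalSpace W]
    [TopologicalSpace W'] (π : W → W') (ν : 𝓑 → PMb (S × W)) (ν' : 𝓑 → PMb (S × W')) : Prop :=
  ∀ B : 𝓑, mapb (Prod.map (id : S → S) π) (ν B).val = (ν' B).val

/-- The data of one level of the hierarchy construction for two players `a, b`:
`WA = H_b^{n-1}`, `WB = H_a^{n-1}`, `HA = H_a^n`, `HB = H_b^n`, the projections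
`π_i^{n-1,n}` and the last (highest-order) CPS of each coherent tuple. -/
structure Lvl (S : Type) [TopologicalSpace S] (𝓑A 𝓑B : Set (Set S)) where
  WA : Type
  WB : Type
  HA : Type
  HB : Type
  tWA : TopologicalSpace WA
  tWB : TopologicalSpace WB
  tHA : TopologicalSpace HA
  tHB : TopologicalSpace HB
  πA : HA → WB
  πB : HB → WA
  lastA : HA → @CPSc S _ 𝓑A WA tWA
  lastB : HB → @CPSc S _ 𝓑B WB tWB

variable (S : Type) [TopologicalSpace S] (𝓑A 𝓑B : Set (Set S))

/-- Level 1 of the hierarchy: first-order CPSs (on `S`, encoded as `S × PUnit`). -/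
def lvl0 : Lvl S 𝓑A 𝓑B where
  WA := PUnit
  WB := PUnit
  HA := CPSc S 𝓑A PUnit
  HB := CPSc S 𝓑B PUnit
  tWA := inferInstance
  tWB := inferInstance
  tHA := inferInstance
  tHB := inferInstance
  πA := fun _ => PUnit.unit
  πB := fun _ => PUnit.unit
  lastA := id
  lastB := id

/-- One inductive step of the hierarchy construction: `H_i^{n+1}` is the set of pairs
`(h, μ^{n+1}) ∈ H_i^n × Δ^{𝓑_i}(S × H_j^n)` such that the marginal of `μ^{n+1}` on the
previous domain is the last coordinate of `h` (coherence). -/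
def lvlStep (L : Lvl S 𝓑A 𝓑B) : Lvl S 𝓑A 𝓑B :=
  letI := L.tWA; letI := L.tWB; letI := L.tHA; letI := L.tHB
  { WA := L.HB
    WB := L.HA
    HA := {p : L.HA × CPSc S 𝓑A L.HB // Coh S 𝓑A L.πB p.2.val ((L.lastA p.1).val)}
    HB := {p : L.HB × CPSc S 𝓑B L.HA // Coh S 𝓑B L.πA p.2.val ((L.lastB p.1).val)}
    tWA := inferInstance
    tWB := inferInstance
    tHA := inferInstance
    tHB := inferInstance
    πA := fun p => p.val.1
    πB := fun p => p.val.1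
    lastA := fun p => p.val.2
    lastB := fun p => p.val.2 }

/-- The hierarchy levels: `(lvl n).HA = H_a^{n+1}`, `(lvl n).WA = H_b^n` (with `H_b^0`
encoded as a one-point space), etc. -/
def lvl : ℕ → Lvl S 𝓑A 𝓑B
  | 0 => lvl0 S 𝓑A 𝓑B
  | n + 1 => lvlStep S 𝓑A 𝓑B (lvl n)

instance (n : ℕ) : TopologicalSpace ((lvl S 𝓑A 𝓑B n).WA) := (lvl S 𝓑A 𝓑B n).tWA
instance (n : ℕ) : TopologicalSpace ((lvl S 𝓑A 𝓑B n).WB) := (lvl S 𝓑A 𝓑B n).tWB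
instance (n : ℕ) : TopologicalSpace ((lvl S 𝓑A 𝓑B n).HA) := (lvl S 𝓑A 𝓑B n).tHA
instance (n : ℕ) : TopologicalSpace ((lvl S 𝓑A 𝓑B n).HB) := (lvl S 𝓑A 𝓑B n).tHB

/-- The set `H_a` of coherent hierarchies of player `a`, inside `∏_{n≥0} Δ^{𝓑_a}(Θ_a^n)`. -/
def HlimA : Set (∀ n : ℕ, CPSc S 𝓑A ((lvl S 𝓑A 𝓑B n).WA)) :=
  {μ | ∀ n : ℕ, Coh S 𝓑A ((lvl S 𝓑A 𝓑B n).πB) (μ (n + 1)).val (μ n).val}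

/-- The set `H_b` of coherent hierarchies of player `b`. -/
def HlimB : Set (∀ n : ℕ, CPSc S 𝓑B ((lvl S 𝓑A 𝓑B n).WB)) :=
  {μ | ∀ n : ℕ, Coh S 𝓑B ((lvl S 𝓑A 𝓑B n).πA) (μ (n + 1)).val (μ n).val}


variable {TA TB : Type} [TopologicalSpace TA] [TopologicalSpace TB]

/-- The defining recursion of the hierarchy maps `h_i^n` of a type structure
`(S, 𝓑_i, T_i, β_i)`: the first-order map is the marginal on `S` of `β_i(t_i)`, the
`(n+1)`-th order map is obtained by pushing `β_i(t_i)` forward along `(Id_S, h_j^n)`, and the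
maps are prefix-compatible. -/
def HierMaps (βA : TA → CPSc S 𝓑A TB) (βB : TB → CPSc S 𝓑B TA)
    (hA : ∀ n, TA → (lvl S 𝓑A 𝓑B n).HA) (hB : ∀ n, TB → (lvl S 𝓑A 𝓑B n).HB) : Prop :=
  (∀ t (B : 𝓑A), (((lvl S 𝓑A 𝓑B 0).lastA (hA 0 t)).val B).val
      = mapb (Prod.map (id : S → S) (fun _ : TB => PUnit.unit)) (((βA t).val B).val)) ∧
  (∀ t (B : 𝓑B), (((lvl S 𝓑A 𝓑B 0).lastB (hB 0 t)).val B).val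
      = mapb (Prod.map (id : S → S) (fun _ : TA => PUnit.unit)) (((βB t).val B).val)) ∧
  (∀ n t (B : 𝓑A), (((lvl S 𝓑A 𝓑B (n + 1)).lastA (hA (n + 1) t)).val B).val
      = mapb (Prod.map (id : S → S) (hB n)) (((βA t).val B).val)) ∧
  (∀ n t (B : 𝓑B), (((lvl S 𝓑A 𝓑B (n + 1)).lastB (hB (n + 1) t)).val B).val
      = mapb (Prod.map (id : S → S) (hA n)) (((βB t).val B).val)) ∧
  (∀ n t, (lvl S 𝓑A 𝓑B (n + 1)).πA (hA (n + 1) t) = hA n t) ∧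
  (∀ n t, (lvl S 𝓑A 𝓑B (n + 1)).πB (hB (n + 1) t) = hB n t)

/-! Over a one-point state space, a Borel probability measure on `S × W` is unique as soon as `W`
is a singleton, so inductively every level `H_i^n` of the hierarchy construction is a singleton:
hierarchy maps are then constant and onto, and every coherent hierarchy is realized. On the other
hand `β_b` has a one-point domain while `Δ(S × T_a)` contains the two distinct Dirac masses. -/

instance PMb.instSubsingleton {W : Type} [TopologicalSpace W] [Subsingleton W] :
    Subsingleton (PMb W) := by
  let : MeasurableSpace W := borel W
  refine ⟨fun P Q => Subtype.ext <| Measure.ext fun s _ => ?_⟩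
  rcases s.eq_empty_or_nonempty with rfl | hs
  · simp
  · rw [hs.eq_univ, P.2.measure_univ, Q.2.measure_univ]

instance PMb.instNontrivial {W : Type} [TopologicalSpace W] [T0Space W] [Nontrivial W] :
    Nontrivial (PMb W) := by
  let : MeasurableSpace W := borel W
  have : BorelSpace W := ⟨rfl⟩
  obtain ⟨x, y, hxy⟩ := exists_pair_ne W
  exact ⟨diracProba x, diracProba y, injective_diracProba.ne hxy⟩

instance CPSc.instSubsingleton {X W : Type} [TopologicalSpace X] [TopologicalSpace W]
    [Subsingleton X] [Subsingleton W] (𝓑 : Set (Set X)) : Subsingleton (CPSc X 𝓑 W) :=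
  inferInstanceAs (Subsingleton {μ : 𝓑 → PMb (X × W) // IsCPScyl X 𝓑 W μ})

def CPSc.ofPMb {X W : Type} [TopologicalSpace X] [TopologicalSpace W] (P : PMb (X × W)) :
    CPSc X {univ} W := by
  letI : MeasurableSpace (X × W) := borel (X × W)
  refine ⟨fun _ => P, fun B => ?_, fun A B C _ _ _ => ?_⟩
  all_goals rw [mem_singleton_iff.mp B.2, univ_prod_univ, P.2.measure_univ]
  exact mul_one _

lemma CPSc.ofPMb_injective {X W : Type} [TopologicalSpace X] [TopologicalSpace W] :
    Function.Injective (CPSc.ofPMb : PMb (X × W) → CPSc X {univ} W) :=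
  fun _ _ h => congrFun (congrArg Subtype.val h) ⟨univ, rfl⟩

instance CPSc.instNontrivial {X W : Type} [TopologicalSpace X] [TopologicalSpace W]
    [Nontrivial (PMb (X × W))] : Nontrivial (CPSc X {univ} W) :=
  CPSc.ofPMb_injective.nontrivial

lemma lvlStep_subsingleton [Subsingleton S] (L : Lvl S 𝓑A 𝓑B) [Subsingleton L.HA]
    [Subsingleton L.HB] :
    Subsingleton (lvlStep S 𝓑A 𝓑B L).HA ∧ Subsingleton (lvlStep S 𝓑A 𝓑B L).HB := by
  let := L.tWA; let := L.tWB; let := L.tHA; let := L.tHB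
  exact ⟨inferInstanceAs (Subsingleton {p : L.HA × CPSc S 𝓑A L.HB // _}),
    inferInstanceAs (Subsingleton {p : L.HB × CPSc S 𝓑B L.HA // _})⟩

lemma lvl_subsingleton [Subsingleton S] :
    ∀ n, Subsingleton (lvl S 𝓑A 𝓑B n).HA ∧ Subsingleton (lvl S 𝓑A 𝓑B n).HB
  | 0 => ⟨inferInstanceAs (Subsingleton (CPSc S 𝓑A PUnit)),
      inferInstanceAs (Subsingleton (CPSc S 𝓑B PUnit))⟩
  | n + 1 =>
    have ⟨_, _⟩ := lvl_subsingleton n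
    lvlStep_subsingleton S 𝓑A 𝓑B (lvl S 𝓑A 𝓑B n)

lemma lvl_W_subsingleton [Subsingleton S] :
    ∀ n, Subsingleton (lvl S 𝓑A 𝓑B n).WA ∧ Subsingleton (lvl S 𝓑A 𝓑B n).WB
  | 0 => ⟨inferInstanceAs (Subsingleton PUnit), inferInstanceAs (Subsingleton PUnit)⟩
  | n + 1 => (lvl_subsingleton S 𝓑A 𝓑B n).symm

theorem redundant_terminal_not_complete_general
    (βa : Bool → CPSc PUnit ({Set.univ} : Set (Set PUnit)) PUnit)
    (βb : PUnit → CPSc PUnit ({Set.univ} : Set (Set PUnit)) Bool) :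
    (¬ Function.Surjective βb) ∧
    ∀ (hA : ∀ n, Bool → (lvl PUnit {Set.univ} {Set.univ} n).HA)
      (hB : ∀ n, PUnit → (lvl PUnit {Set.univ} {Set.univ} n).HB),
      HierMaps PUnit {Set.univ} {Set.univ} βa βb hA hB →
      (∀ n (t t' : Bool), hA n t = hA n t') ∧
      (∀ n, Function.Surjective (hA n) ∧ Function.Surjective (hB n)) ∧
      (∀ μ ∈ HlimA PUnit {Set.univ} {Set.univ},
        ∃ t, ∀ n, (lvl PUnit {Set.univ} {Set.univ} n).lastA (hA n t) = μ n) ∧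
      (∀ μ ∈ HlimB PUnit {Set.univ} {Set.univ},
        ∃ u, ∀ n, (lvl PUnit {Set.univ} {Set.univ} n).lastB (hB n u) = μ n) := by
  refine ⟨fun hβb => not_subsingleton _ hβb.subsingleton, fun hA hB _ => ?_⟩
  have hH := lvl_subsingleton PUnit {univ} {univ}
  have hW := lvl_W_subsingleton PUnit {univ} {univ}
  refine ⟨fun n t t' => (hH n).1.elim _ _,
    fun n => ⟨fun y => ⟨true, (hH n).1.elim _ _⟩, fun y => ⟨(), (hH n).2.elim _ _⟩⟩,
    fun μ _ => ⟨true, fun n => have := (hW n).1; Subsingleton.elim _ _⟩,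
    fun μ _ => ⟨(), fun n => have := (hW n).2; Subsingleton.elim _ _⟩⟩

/-- Friedenberg's example: `S = {s}` a singleton, `T_a = {t_a', t_a''}` (encoded as `Bool`,
with `t_a' = true`), `T_b = {t_b}`, where `β_a(t_a') = β_a(t_a'') = δ_{(s,t_b)}` and
`β_b(t_b) = δ_{(s,t_a')}`. Every type generates the unique (point-mass) hierarchy, so both
hierarchy maps are constant and the structure is terminal (its hierarchy images are all of the
canonical hierarchy spaces), but `β_b` is not surjective, so the structure is not complete. -/
theorem redundant_terminal_not_complete
    (βa : Bool → CPSc PUnit ({Set.univ} : Set (Set PUnit)) PUnit)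
    (βb : PUnit → CPSc PUnit ({Set.univ} : Set (Set PUnit)) Bool)
    (hβa : ∀ (t : Bool) (B : ({Set.univ} : Set (Set PUnit))),
      ((βa t).val B).val = @Measure.dirac (PUnit × PUnit) (borel _) (PUnit.unit, PUnit.unit))
    (hβb : ∀ (u : PUnit) (B : ({Set.univ} : Set (Set PUnit))),
      ((βb u).val B).val = @Measure.dirac (PUnit × Bool) (borel _) (PUnit.unit, true)) :
    (¬ Function.Surjective βb) ∧
    ∀ (hA : ∀ n, Bool → (lvl PUnit {Set.univ} {Set.univ} n).HA)
      (hB : ∀ n, PUnit → (lvl PUnit {Set.univ} {Set.univ} n).HB),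
      HierMaps PUnit {Set.univ} {Set.univ} βa βb hA hB →
      (∀ n (t t' : Bool), hA n t = hA n t') ∧
      (∀ n, Function.Surjective (hA n) ∧ Function.Surjective (hB n)) ∧
      (∀ μ ∈ HlimA PUnit {Set.univ} {Set.univ},
        ∃ t, ∀ n, (lvl PUnit {Set.univ} {Set.univ} n).lastA (hA n t) = μ n) ∧
      (∀ μ ∈ HlimB PUnit {Set.univ} {Set.univ},
        ∃ u, ∀ n, (lvl PUnit {Set.univ} {Set.univ} n).lastB (hB n u) = μ n) :=
  redundant_terminal_not_complete_general βa βb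

end
end
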